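/- Let F : ℝ → ℝ be a lift of an orientation-preserving circle homeomorphism, and let (G_t)_{t∈[0,1]} be a continuous family of lifts of orientation-preserving circle homeomorphisms with G₀ = id_ℝ, G₁ = (x ↦ x + 1), and such that for every x ∈ ℝ the map t ↦ G_t(x) is nondecreasing. Then for every c ∈ [τ(F), τ(F) + 1] there exists t ∈ [0,1] with τ(G_t ∘ F) = c. In particular, the rotation numbers of the induced circle homeomorphisms of the G_t ∘ F, t ∈ [0,1], attain every value of ℝ/ℤ. -/

import Mathlib

/-!
Composing with `G_t` turns `F` into the lift `G_t ∘ F`, whose translation number depends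
continuously on `t`: it is the uniform limit of `t ↦ (G_t ∘ F)ⁿ(0) / n`, since
`|(f ^ n) 0 - n τ(f)| ≤ 1` for every lift `f`. At `t = 0` the translation number is `τ(F)`, and
at `t = 1` it is `τ(F) + 1` because the translation by `1` commutes with `F`. The intermediate
value theorem on `[0, 1]` finishes the proof.
-/

open Set Filter

/-- A lift of an orientation-preserving circle homeomorphism: a continuous strictly increasing
surjection `F : ℝ → ℝ` with `F(x+1) = F(x)+1` for all `x`. -/
def IsCircleLift (F : ℝ → ℝ) : Prop :=
  Continuous F ∧ StrictMono F ∧ Function.Surjective F ∧ ∀ x : ℝ, F (x + 1) = F x + 1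

/-- `τ` is the translation number of the lift `F`: `(Fⁿ(x) − x)/n → τ` for every `x`.
The rotation number of the induced circle homeomorphism is `τ` mod 1. -/
def HasTransNum (F : ℝ → ℝ) (τ : ℝ) : Prop :=
  ∀ x : ℝ, Tendsto (fun n : ℕ => (F^[n] x - x) / (n : ℝ)) atTop (nhds τ)

theorem continuous_iterate_apply {X Y : Type*} [TopologicalSpace X] [TopologicalSpace Y]
    {f : X → Y → Y} (hf : Continuous fun p : X × Y => f p.1 p.2) (y : Y) (n : ℕ) :
    Continuous fun x => (f x)^[n] y := by
  induction n with
  | zero => exact continuous_const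
  | succ n ih =>
    simp only [Function.iterate_succ_apply']
    exact hf.comp (continuous_id.prodMk ih)

namespace CircleDeg1Lift

theorem dist_translationNumber_pow_map_zero_div_le (f : CircleDeg1Lift) {n : ℕ} (hn : n ≠ 0) :
    dist f.translationNumber ((f ^ n) 0 / n) ≤ 1 / n := by
  have hn' : (0 : ℝ) < n := Nat.cast_pos.2 (Nat.pos_of_ne_zero hn)
  rw [Real.dist_eq, sub_div' hn'.ne', abs_div, abs_of_pos hn', mul_comm, ← Real.dist_eq,
    dist_comm]
  exact div_le_div_of_nonneg_right (f.dist_pow_map_zero_mul_translationNumber_le n) hn'.le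

theorem tendstoUniformly_pow_map_zero_div {X : Type*} (H : X → CircleDeg1Lift) :
    TendstoUniformly (fun (n : ℕ) x => ((H x) ^ n) 0 / n)
      (fun x => (H x).translationNumber) atTop := by
  rw [Metric.tendstoUniformly_iff]
  intro ε hε
  obtain ⟨N, hN⟩ := exists_nat_one_div_lt hε
  filter_upwards [eventually_ge_atTop (N + 1)] with n hn x
  calc dist (H x).translationNumber ((H x ^ n) 0 / n)
      ≤ 1 / n := (H x).dist_translationNumber_pow_map_zero_div_le (by omega)
    _ ≤ 1 / ((N : ℝ) + 1) := by gcongr; exact_mod_cast hn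
    _ < ε := hN

theorem continuous_translationNumber_comp {X : Type*} [TopologicalSpace X]
    {H : X → CircleDeg1Lift} (hH : Continuous fun p : X × ℝ => H p.1 p.2) :
    Continuous fun x => (H x).translationNumber := by
  refine (tendstoUniformly_pow_map_zero_div H).continuous (Frequently.of_forall fun n => ?_)
  simp only [coe_pow]
  exact (continuous_iterate_apply hH 0 n).div_const _

theorem hasTransNum_iff (f : CircleDeg1Lift) {τ : ℝ} :
    HasTransNum f τ ↔ f.translationNumber = τ := by
  constructor
  · intro h
    exact f.translationNumber_eq_of_tendsto₀ (by simpa using h 0)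
  · rintro rfl x
    simpa [coe_pow] using f.tendsto_translationNumber x

theorem translationNumber_translate_one_mul (f : CircleDeg1Lift) :
    (translate (Multiplicative.ofAdd 1) * f).translationNumber = f.translationNumber + 1 := by
  have hcomm : Commute (translate (Multiplicative.ofAdd 1) : CircleDeg1Lift) f :=
    commute_iff_commute.2 fun x => by simp [translate_apply, map_one_add]
  rw [translationNumber_mul_of_commute hcomm, translationNumber_translate, add_comm]

end CircleDeg1Lift

def IsCircleLift.toCircleDeg1Lift {F : ℝ → ℝ} (hF : IsCircleLift F) : CircleDeg1Lift :=
  ⟨⟨F, hF.2.1.monotone⟩, hF.2.2.2⟩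

@[simp]
theorem IsCircleLift.coe_toCircleDeg1Lift {F : ℝ → ℝ} (hF : IsCircleLift F) :
    ⇑hF.toCircleDeg1Lift = F :=
  rfl

theorem transNum_attains_every_value_general (F : ℝ → ℝ) (hF : IsCircleLift F)
    (G : ℝ → ℝ → ℝ)
    (hGcont : ContinuousOn (fun p : ℝ × ℝ => G p.1 p.2) (Icc 0 1 ×ˢ univ))
    (hGlift : ∀ t ∈ Icc (0:ℝ) 1, IsCircleLift (G t))
    (hG0 : G 0 = id)
    (hG1 : ∀ x : ℝ, G 1 x = x + 1)
    (τF : ℝ) (hτF : HasTransNum F τF) :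
    ∀ c : ℝ, τF ≤ c → c ≤ τF + 1 →
      ∃ t ∈ Icc (0:ℝ) 1, HasTransNum (fun x => G t (F x)) c := by
  intro c hc₀ hc₁
  let H : Icc (0:ℝ) 1 → CircleDeg1Lift := fun t =>
    (hGlift t t.2).toCircleDeg1Lift * hF.toCircleDeg1Lift
  have hH : Continuous fun p : Icc (0:ℝ) 1 × ℝ => H p.1 p.2 :=
    hGcont.comp_continuous ((continuous_subtype_val.comp continuous_fst).prodMk
      (hF.1.comp continuous_snd)) fun p => ⟨p.1.2, mem_univ _⟩
  have hH₀ : H 0 = hF.toCircleDeg1Lift := CircleDeg1Lift.ext fun x => by simp [H, hG0]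
  have hH₁ : H 1 = CircleDeg1Lift.translate (Multiplicative.ofAdd 1) * hF.toCircleDeg1Lift :=
    CircleDeg1Lift.ext fun x => by simp [H, hG1, CircleDeg1Lift.translate_apply, add_comm]
  have hτ : hF.toCircleDeg1Lift.translationNumber = τF :=
    (CircleDeg1Lift.hasTransNum_iff _).1 hτF
  have hc : c ∈ Icc (H 0).translationNumber (H 1).translationNumber := by
    rw [hH₀, hH₁, CircleDeg1Lift.translationNumber_translate_one_mul, hτ]
    exact ⟨hc₀, hc₁⟩
  obtain ⟨t, ht⟩ :=
    intermediate_value_univ 0 1 (CircleDeg1Lift.continuous_translationNumber_comp hH) hc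
  exact ⟨t, t.2, (CircleDeg1Lift.hasTransNum_iff (H t)).2 ht⟩

/-- If `F` is a lift of an orientation-preserving circle homeomorphism and `(G_t)_{t∈[0,1]}`
is a continuous family of such lifts with `G₀ = id`, `G₁ = (x ↦ x+1)` and `t ↦ G_t(x)`
nondecreasing for every `x`, then every value `c ∈ [τ(F), τ(F)+1]` is the translation number
of some `G_t ∘ F`; in particular the rotation numbers of the induced circle homeomorphisms
attain every value of `ℝ/ℤ`. -/
theorem transNum_attains_every_value (F : ℝ → ℝ) (hF : IsCircleLift F)
    (G : ℝ → ℝ → ℝ)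
    (hGcont : ContinuousOn (fun p : ℝ × ℝ => G p.1 p.2) (Icc 0 1 ×ˢ univ))
    (hGlift : ∀ t ∈ Icc (0:ℝ) 1, IsCircleLift (G t))
    (hG0 : G 0 = id)
    (hG1 : ∀ x : ℝ, G 1 x = x + 1)
    (hGmono : ∀ x : ℝ, MonotoneOn (fun t => G t x) (Icc 0 1))
    (τF : ℝ) (hτF : HasTransNum F τF) :
    ∀ c : ℝ, τF ≤ c → c ≤ τF + 1 →
      ∃ t ∈ Icc (0:ℝ) 1, HasTransNum (fun x => G t (F x)) c :=
  transNum_attains_every_value_general F hF G hGcont hGlift hG0 hG1 τF hτF
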